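/- arXiv:2504.16762 — 5 statements merged into one kernel-verified Lean document; each statement's English description precedes it below -/
import Mathlib

section
/- Let G† be the weighted extended graph of a directed graph G = (V, E) with sink set S and root r, where original edges and edges (s, r) have weight 0 and inverse edges have weight 1. Then no minimum-weight spanning arborescence T of G† converging to r contains two distinct inverse edges (p₁, q₁) and (p₂, q₂) such that the weight-0 edges (p₁, p₂) and (p₂, p₁) both exist in G†. -/
/-- The extended graph of a directed graph `E` with sink set `S`:
vertices are `Option V`, with the fresh root `none`. -/
def ExtG {V : Type*} (E : V → V → Prop) (S : Set V) : Option V → Option V → Prop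
  | some p, some q => E p q ∨ (E q p ∧ ¬ E p q)
  | some s, none => s ∈ S
  | none, _ => False

/-- Weights in the extended graph: original edges of `E` and sink-to-root
edges have weight 0, inverse edges have weight 1. -/
def extW {V : Type*} (E : V → V → Prop) [DecidableRel E] : V → Option V → ℕ
  | p, some q => if E p q then 0 else 1
  | _, none => 0

/-- One step along the parent function `f`, the root `none` is absorbing. -/
def ostep {V : Type*} (f : V → Option V) : Option V → Option V
  | some v => f v
  | none => none

/-- Spanning arborescence converging to the root `none`. -/
def IsArb {V : Type*} (G : Option V → Option V → Prop) (f : V → Option V) : Prop :=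
  (∀ v, G (some v) (f v)) ∧ ∀ v, ∃ n : ℕ, (ostep f)^[n] (some v) = none

/-- Total weight of an arborescence. -/
def arbWeight {V : Type*} [Fintype V] (w : V → Option V → ℕ) (f : V → Option V) : ℕ :=
  ∑ v : V, w v (f v)

/-- Minimum-weight spanning arborescence converging to the root. -/
def IsMinArb {V : Type*} [Fintype V] (G : Option V → Option V → Prop)
    (w : V → Option V → ℕ) (f : V → Option V) : Prop :=
  IsArb G f ∧ ∀ g : V → Option V, IsArb G g → arbWeight w f ≤ arbWeight w g

open Classical in
noncomputable def odist {V : Type*} (f : V → Option V)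
    (h : ∀ v, ∃ n : ℕ, (ostep f)^[n] (some v) = none) (v : V) : ℕ :=
  Nat.find (h v)

open Classical in
lemma odist_spec {V : Type*} (f : V → Option V)
    (h : ∀ v, ∃ n : ℕ, (ostep f)^[n] (some v) = none) (v : V) :
    (ostep f)^[odist f h v] (some v) = none := Nat.find_spec (h v)

open Classical in
lemma odist_lt {V : Type*} (f : V → Option V)
    (h : ∀ v, ∃ n : ℕ, (ostep f)^[n] (some v) = none) {v u : V}
    (hvu : f v = some u) : odist f h u < odist f h v := by
  have hs := odist_spec f h v
  have hpos : 0 < odist f h v := by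
    rcases Nat.eq_zero_or_pos (odist f h v) with h0 | h0
    · rw [h0] at hs; simp at hs
    · exact h0
  have : (ostep f)^[odist f h v - 1] (some u) = none := by
    have := hs
    rw [← Nat.succ_pred_eq_of_pos hpos, Function.iterate_succ_apply] at this
    simpa [ostep, hvu] using this
  have hle : odist f h u ≤ odist f h v - 1 := Nat.find_le this
  omega

lemma ostep_none {V : Type*} (f : V → Option V) (n : ℕ) :
    (ostep f)^[n] none = none := by
  induction n with
  | zero => rfl
  | succ n ih => rw [Function.iterate_succ_apply]; exact ih

lemma key {V : Type*} [Fintype V] (E : V → V → Prop) [DecidableRel E] (S : Set V)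
    (f : V → Option V) (hmin : IsMinArb (ExtG E S) (extW E) f)
    (p₁ p₂ q₂ : V)
    (he₂ : f p₂ = some q₂)
    (hinv₂ : ¬ E p₂ q₂)
    (hp : p₁ ≠ p₂)
    (h₂₁ : E p₂ p₁)
    (hreach : ∀ v, ∃ n : ℕ, (ostep f)^[n] (some v) = none)
    (hd : odist f hreach p₁ ≤ odist f hreach p₂) : False := by
  classical
  set d := odist f hreach with hdd
  set g : V → Option V := Function.update f p₂ (some p₁) with hg
  -- g agrees with f away from p₂
  have hgne : ∀ v, v ≠ p₂ → g v = f v := fun v hv => Function.update_of_ne hv _ _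
  have hgp₂ : g p₂ = some p₁ := Function.update_self _ _ _
  -- Lemma A: below d p₂, iterates agree
  have lemA : ∀ n : ℕ, ∀ v : V, d v < d p₂ →
      (ostep g)^[n] (some v) = (ostep f)^[n] (some v) := by
    intro n
    induction n with
    | zero => intro v _; rfl
    | succ n ih =>
      intro v hv
      have hvne : v ≠ p₂ := fun h => by rw [h] at hv; omega
      rw [Function.iterate_succ_apply, Function.iterate_succ_apply]
      have : ostep g (some v) = ostep f (some v) := by simp [ostep, hgne v hvne]
      rw [this]
      cases hfv : f v with
      | none => simp [ostep, hfv, ostep_none]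
      | some u =>
        have : d u < d v := odist_lt f hreach hfv
        simp only [ostep, hfv]
        exact ih u (by omega)
  -- p₁ reaches none under g
  have hp₁ : ∃ n, (ostep g)^[n] (some p₁) = none := by
    cases hfp₁ : f p₁ with
    | none =>
      exact ⟨1, by simp [ostep, hgne p₁ hp, hfp₁]⟩
    | some u =>
      have hu : d u < d p₂ := lt_of_lt_of_le (odist_lt f hreach hfp₁) hd
      refine ⟨d u + 1, ?_⟩
      rw [Function.iterate_succ_apply]
      have : ostep g (some p₁) = some u := by simp [ostep, hgne p₁ hp, hfp₁]
      rw [this, lemA (d u) u hu]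
      exact odist_spec f hreach u
  -- all vertices reach none under g
  have hreachg : ∀ v, ∃ n, (ostep g)^[n] (some v) = none := by
    suffices h : ∀ k, ∀ v, d v = k → ∃ n, (ostep g)^[n] (some v) = none by
      intro v; exact h (d v) v rfl
    intro k
    induction k using Nat.strong_induction_on with
    | _ k ih =>
      intro v hdv
      by_cases hv : v = p₂
      · subst hv
        obtain ⟨n, hn⟩ := hp₁
        exact ⟨n + 1, by rw [Function.iterate_succ_apply]; simpa [ostep, hgp₂] using hn⟩
      · cases hfv : f v with
        | none => exact ⟨1, by simp [ostep, hgne v hv, hfv]⟩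
        | some u =>
          have hlt : d u < k := hdv ▸ odist_lt f hreach hfv
          obtain ⟨n, hn⟩ := ih (d u) hlt u rfl
          refine ⟨n + 1, ?_⟩
          rw [Function.iterate_succ_apply]
          have : ostep g (some v) = some u := by simp [ostep, hgne v hv, hfv]
          rw [this]; exact hn
  -- g is an arborescence
  have hgarb : IsArb (ExtG E S) g := by
    constructor
    · intro v
      by_cases hv : v = p₂
      · subst hv; rw [hgp₂]; exact Or.inl h₂₁
      · rw [hgne v hv]; exact hmin.1.1 v
    · exact hreachg
  -- weight strictly decreases
  have hlt : arbWeight (extW E) g < arbWeight (extW E) f := by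
    apply Finset.sum_lt_sum
    · intro i _
      by_cases hi : i = p₂
      · subst hi; rw [hgp₂, he₂]; simp [extW, h₂₁, hinv₂]
      · rw [hgne i hi]
    · exact ⟨p₂, Finset.mem_univ _, by rw [hgp₂, he₂]; simp [extW, h₂₁, hinv₂]⟩
  exact absurd (hmin.2 g hgarb) (by omega)

/-- No minimum-weight arborescence of the extended graph contains two distinct
inverse edges `(p₁, q₁)`, `(p₂, q₂)` whose tails are joined by weight-0 edges
in both directions. -/
theorem stmt1 {V : Type*} [Fintype V] (E : V → V → Prop) [DecidableRel E] (S : Set V)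
    (f : V → Option V) (hmin : IsMinArb (ExtG E S) (extW E) f)
    (p₁ q₁ p₂ q₂ : V)
    (he₁ : f p₁ = some q₁) (he₂ : f p₂ = some q₂)
    (hinv₁ : E q₁ p₁ ∧ ¬ E p₁ q₁) (hinv₂ : E q₂ p₂ ∧ ¬ E p₂ q₂)
    (hne : (p₁, q₁) ≠ (p₂, q₂))
    (h₁₂ : E p₁ p₂) (h₂₁ : E p₂ p₁) : False := by
  have hp : p₁ ≠ p₂ := by
    intro h
    subst h
    rw [he₁] at he₂
    exact hne (by simp [Option.some_inj.mp he₂])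
  have hreach := hmin.1.2
  rcases le_total (odist f hreach p₁) (odist f hreach p₂) with hd | hd
  · exact key E S f hmin p₁ p₂ q₂ he₂ hinv₂.2 hp h₂₁ hreach hd
  · exact key E S f hmin p₂ p₁ q₁ he₁ hinv₁.2 hp.symm h₁₂ hreach hd
end

section
/- In a minimum-weight arborescence T converging to the root r of a weighted extended graph G† (original edges weight 0, inverse edges weight 1), suppose (p, q) is an inverse edge of T with q ≠ r and q not a sink, and let (q, q') be the unique edge of T leaving q. If the weight-0 edge (p, q') exists in G†, then q' ≠ p. Moreover, if (p, q') ∈ E has weight 0, then replacing (p, q) by (p, q') yields an arborescence of strictly smaller weight; hence no minimum-weight arborescence contains an inverse edge (p, q) such that (p, q') is a weight-0 edge, where q' is the successor of q in T. -/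
/-!
Redirecting the parent of `p` from `q` to its grandparent `q'` keeps an arborescence:
since the tree path from `p` reaches the root, `p` does not lie on the tree path from `q'`,
so that path survives the change, and every other vertex reaches the root either as before
or through `p`. The swap trades the weight-1 edge `(p, q)` for the weight-0 edge `(p, q')`,
contradicting minimality.
-/

open Function

section ParentFunction

variable {V : Type*} (f : V → Option V)

@[simp]
lemma ostep_some (v : V) : ostep f (some v) = f v := rfl

@[simp]
lemma ostep_iterate_none (n : ℕ) : (ostep f)^[n] none = none :=
  iterate_fixed rfl n

variable {f}

lemma ostep_iterate_ne_self {p : V} {n k : ℕ} (hn : (ostep f)^[n] (some p) = none)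
    (hk : 0 < k) : (ostep f)^[k] (some p) ≠ some p := by
  intro hcyc
  have hperiodic : (ostep f)^[n * k] (some p) = some p :=
    IsPeriodicPt.const_mul (m := k) hcyc n
  have hroot : (ostep f)^[n * k] (some p) = none := by
    rw [← Nat.sub_add_cancel (Nat.le_mul_of_pos_right n hk), iterate_add_apply, hn,
      ostep_iterate_none]
  exact Option.some_ne_none p (hperiodic.symm.trans hroot)

variable [DecidableEq V]

lemma ostep_update_iterate_of_forall_ne {p : V} {y x : Option V}
    (hx : ∀ k, (ostep f)^[k] x ≠ some p) (k : ℕ) :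
    (ostep (update f p y))^[k] x = (ostep f)^[k] x := by
  induction k with
  | zero => rfl
  | succ k ih =>
    rw [iterate_succ_apply', iterate_succ_apply', ih]
    cases hk : (ostep f)^[k] x with
    | none => rfl
    | some v =>
      have hv : v ≠ p := fun hvp => hx k (hvp ▸ hk)
      simp [hv]

lemma exists_ostep_update_iterate_eq_none {p : V} {y : Option V}
    (hy : ∃ m, (ostep (update f p y))^[m] y = none) {n : ℕ} :
    ∀ {x : Option V}, (ostep f)^[n] x = none →
      ∃ m, (ostep (update f p y))^[m] x = none := by
  induction n with
  | zero => exact fun hx => ⟨0, hx⟩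
  | succ n ih =>
    rintro (_ | v) hx
    · exact ⟨0, rfl⟩
    by_cases hvp : v = p
    · obtain ⟨m, hm⟩ := hy
      exact ⟨m + 1, by rw [iterate_succ_apply, hvp, ostep_some, update_self, hm]⟩
    · obtain ⟨m, hm⟩ := ih (by rwa [iterate_succ_apply] at hx)
      exact ⟨m + 1, by rw [iterate_succ_apply, ostep_some, update_of_ne hvp]; exact hm⟩

lemma IsArb.update {G : Option V → Option V → Prop} (hf : IsArb G f) {p : V}
    {y : Option V} (hedge : G (some p) y) (hy : ∀ k, (ostep f)^[k] y ≠ some p) :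
    IsArb G (Function.update f p y) := by
  obtain ⟨hedges, hreach⟩ := hf
  have hyroot : ∃ m, (ostep (Function.update f p y))^[m] y = none := by
    rcases y with _ | u
    · exact ⟨0, rfl⟩
    obtain ⟨m, hm⟩ := hreach u
    exact ⟨m, (ostep_update_iterate_of_forall_ne hy m).trans hm⟩
  refine ⟨fun v => ?_, fun v => ?_⟩
  · by_cases hvp : v = p
    · subst hvp; simpa using hedge
    · simpa [update_of_ne hvp] using hedges v
  · obtain ⟨n, hn⟩ := hreach v
    exact exists_ostep_update_iterate_eq_none hyroot hn

end ParentFunction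

lemma arbWeight_update_add {V : Type*} [Fintype V] [DecidableEq V] (w : V → Option V → ℕ)
    (f : V → Option V) (p : V) (y : Option V) :
    arbWeight w (update f p y) + w p (f p) = arbWeight w f + w p y := by
  unfold arbWeight
  simp_rw [apply_update (fun v => w v) f p y]
  rw [Finset.sum_update_of_mem (Finset.mem_univ p), Finset.sdiff_singleton_eq_erase,
    ← Finset.add_sum_erase _ _ (Finset.mem_univ p)]
  ring

theorem stmt2_general {V : Type*} [Fintype V] (E : V → V → Prop) [DecidableRel E] (S : Set V)
    (f : V → Option V) (hmin : IsMinArb (ExtG E S) (extW E) f)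
    (p q q' : V)
    (he : f p = some q)
    (hinv : E q p ∧ ¬ E p q)
    (hq' : f q = some q')
    (hpq' : E p q') : False := by
  classical
  obtain ⟨harb, hopt⟩ := hmin
  obtain ⟨N, hN⟩ := harb.2 p
  have hgrandparent : (ostep f)^[2] (some p) = some q' := by simp [he, hq']
  have hq'_avoids : ∀ k, (ostep f)^[k] (some q') ≠ some p := fun k hk =>
    ostep_iterate_ne_self (k := k + 2) hN (by omega) (by rw [iterate_add_apply, hgrandparent, hk])
  have hswap := harb.update (show ExtG E S (some p) (some q') from Or.inl hpq') hq'_avoids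
  have hweight := arbWeight_update_add (extW E) f p (some q')
  have hle := hopt _ hswap
  simp only [he, extW, hinv.2, hpq', if_true, if_false] at hweight
  omega

/-- No minimum-weight arborescence of the extended graph contains an inverse
edge `(p, q)` with non-sink head `q` such that the weight-0 edge `(p, q')`
exists, where `(q, q')` is the unique edge of the arborescence leaving `q`.
(In particular the replacement of `(p, q)` by `(p, q')` would give a strictly
lighter arborescence.) -/
theorem stmt2 {V : Type*} [Fintype V] (E : V → V → Prop) [DecidableRel E] (S : Set V)
    (f : V → Option V) (hmin : IsMinArb (ExtG E S) (extW E) f)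
    (p q q' : V)
    (he : f p = some q)
    (hinv : E q p ∧ ¬ E p q)
    (hqS : q ∉ S)
    (hq' : f q = some q')
    (hpq' : E p q') : False :=
  stmt2_general E S f hmin p q q' he hinv hq' hpq'
end

section
/- Let f : V₁ → V₂ be a map between vertex sets of weighted directed graphs G₁† and G₂† (each with a root, r₁ and r₂, with f(r₁) = r₂) such that for every edge (p, q) of G₁† of weight w there is an edge (f(p), f(q)) of weight at most w in G₂†, and f is surjective onto V₂ with every vertex of G₂ being the image of some vertex, and moreover f restricted to a distinguished subset W ⊆ V₁ with f(W) = V₂ is such that f(v) = v for all v ∈ W ⊆ V₂. Then the minimum weight of a spanning arborescence of G₂† converging to r₂ is at most the minimum weight of a spanning arborescence of G₁† converging to r₁. -/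
/-!
Pull every vertex of `W` back to a preimage of least depth in the arborescence `T₁`, take its
`T₁`-parent and push that forward by `f`. Each step strictly lowers the least preimage depth, so
the resulting parent map on `W` is an arborescence of `G₂` rooted at `f r₁`; its edges are images
of distinct edges of `T₁`, so its weight is at most that of `T₁`.
-/

/-- Rooted spanning arborescence converging to `r` inside the vertex type:
every non-root vertex has its unique outgoing edge `(v, f v)` in the graph,
and every vertex reaches the root by iterating the parent map. -/
def IsArbR {V : Type*} (G : V → V → Prop) (r : V) (f : V → V) : Prop :=
  (∀ v, v ≠ r → G v (f v)) ∧ ∀ v, ∃ n : ℕ, f^[n] v = r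

/-- Total weight of a rooted arborescence. -/
def arbWeightR {V : Type*} [Fintype V] [DecidableEq V]
    (w : V → V → ℕ) (r : V) (f : V → V) : ℕ :=
  ∑ v ∈ Finset.univ.filter (· ≠ r), w v (f v)

/-- Minimum-weight rooted spanning arborescence converging to `r`. -/
def IsMinArbR {V : Type*} [Fintype V] [DecidableEq V] (G : V → V → Prop)
    (w : V → V → ℕ) (r : V) (f : V → V) : Prop :=
  IsArbR G r f ∧ ∀ g : V → V, IsArbR G r g → arbWeightR w r f ≤ arbWeightR w r g

open Function

theorem Function.Surjective.exists_rightInverse_forall_le {α β γ : Type*} [LinearOrder γ]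
    [WellFoundedLT γ] {f : α → β} (hf : Surjective f) (φ : α → γ) :
    ∃ x : β → α, RightInverse x f ∧ ∀ a, φ (x (f a)) ≤ φ a :=
  ⟨fun b => argminOn φ (f ⁻¹' {b}) (hf b), fun b => argminOn_mem φ _ (hf b),
    fun a => argminOn_le φ (f ⁻¹' {f a}) rfl⟩

theorem exists_iterate_eq_of_lt {α : Type*} {g : α → α} {r : α} (φ : α → ℕ)
    (hφ : ∀ v, v ≠ r → φ (g v) < φ v) (v : α) : ∃ n, g^[n] v = r := by
  induction hv : φ v using Nat.strong_induction_on generalizing v with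
  | _ k ih =>
    by_cases hvr : v = r
    · exact ⟨0, hvr⟩
    · obtain ⟨n, hn⟩ := ih _ (hv ▸ hφ v hvr) (g v) rfl
      exact ⟨n + 1, hn⟩

noncomputable def rootDepth {V : Type*} (T : V → V) (r u : V) : ℕ :=
  sInf {n | T^[n] u = r}

theorem rootDepth_apply_lt {V : Type*} {T : V → V} {r u : V} (hu : ∃ n, T^[n] u = r)
    (hur : u ≠ r) : rootDepth T r (T u) < rootDepth T r u := by
  have hmem : T^[rootDepth T r u] u = r := Nat.sInf_mem hu
  obtain ⟨k, hk⟩ : ∃ k, rootDepth T r u = k + 1 :=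
    Nat.exists_eq_succ_of_ne_zero fun h0 => hur (by rwa [h0] at hmem)
  rw [hk, iterate_succ_apply] at hmem
  exact hk ▸ Nat.lt_succ_of_le (Nat.sInf_le hmem)

theorem IsArbR.exists_map {V W : Type*} {G₁ : V → V → Prop} {G₂ : W → W → Prop} {r : V}
    {T : V → V} (hT : IsArbR G₁ r T) {f : V → W} (hf : Surjective f)
    (hG : ∀ p q, G₁ p q → G₂ (f p) (f q)) :
    ∃ x : W → V, RightInverse x f ∧ IsArbR G₂ (f r) (f ∘ T ∘ x) := by
  obtain ⟨x, hx, hmin⟩ := hf.exists_rightInverse_forall_le (rootDepth T r)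
  have hxr : ∀ v, v ≠ f r → x v ≠ r := fun v hv => ne_of_apply_ne f (by rwa [hx v])
  refine ⟨x, hx, fun v hv => ?_, exists_iterate_eq_of_lt (rootDepth T r ∘ x) fun v hv => ?_⟩
  · simpa only [comp_apply, hx v] using hG _ _ (hT.1 _ (hxr v hv))
  · calc rootDepth T r (x (f (T (x v)))) ≤ rootDepth T r (T (x v)) := hmin _
      _ < rootDepth T r (x v) := rootDepth_apply_lt (hT.2 _) (hxr v hv)

theorem arbWeightR_map_le {V W : Type*} [Fintype V] [DecidableEq V] [Fintype W] [DecidableEq W]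
    {w₁ : V → V → ℕ} {w₂ : W → W → ℕ} {r : V} {T : V → V} {f : V → W} {x : W → V}
    (hx : RightInverse x f) (hw : ∀ u, u ≠ r → w₂ (f u) (f (T u)) ≤ w₁ u (T u)) :
    arbWeightR w₂ (f r) (f ∘ T ∘ x) ≤ arbWeightR w₁ r T := by
  have hxr : ∀ v, v ≠ f r → x v ≠ r := fun v hv => ne_of_apply_ne f (by rwa [hx v])
  let xEmb : W ↪ V := ⟨x, hx.injective⟩
  calc ∑ v ∈ Finset.univ.filter (· ≠ f r), w₂ v (f (T (x v)))
      ≤ ∑ v ∈ Finset.univ.filter (· ≠ f r), w₁ (x v) (T (x v)) :=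
        Finset.sum_le_sum fun v hv => by
          simpa only [hx v] using hw (x v) (hxr v (Finset.mem_filter.mp hv).2)
    _ = ∑ u ∈ (Finset.univ.filter (· ≠ f r)).map xEmb, w₁ u (T u) :=
        (Finset.sum_map _ xEmb fun u => w₁ u (T u)).symm
    _ ≤ ∑ u ∈ Finset.univ.filter (· ≠ r), w₁ u (T u) := by
        refine Finset.sum_le_sum_of_subset fun u hu => ?_
        obtain ⟨v, hv, rfl⟩ := Finset.mem_map.mp hu
        exact Finset.mem_filter.mpr ⟨Finset.mem_univ _, hxr v (Finset.mem_filter.mp hv).2⟩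

/-- If `f : V₁ → V₂` (with `V₂ = W` a distinguished subset of `V₁`) maps the
root to the root, fixes every vertex of `W` (hence is surjective onto `V₂`),
and maps every weight-`w` edge of `G₁` to an edge of `G₂` of weight at most
`w`, then the minimum weight of a spanning arborescence of `G₂` converging to
`r₂` is at most that of `G₁` converging to `r₁`. -/
theorem stmt4 {V : Type*} [Fintype V] [DecidableEq V] (W : Set V) [Fintype W]
    (G₁ : V → V → Prop) (G₂ : W → W → Prop)
    (w₁ : V → V → ℕ) (w₂ : W → W → ℕ)
    (r₁ : V) (r₂ : W) (f : V → W)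
    (hroot : f r₁ = r₂)
    (hfix : ∀ v : W, f v = v)
    (hedge : ∀ p q : V, G₁ p q → G₂ (f p) (f q) ∧ w₂ (f p) (f q) ≤ w₁ p q)
    (T₁ : V → V) (T₂ : W → W)
    (h₁ : IsMinArbR G₁ w₁ r₁ T₁) (h₂ : IsMinArbR G₂ w₂ r₂ T₂) :
    arbWeightR w₂ r₂ T₂ ≤ arbWeightR w₁ r₁ T₁ := by
  have hf : Surjective f := fun v => ⟨v, hfix v⟩
  obtain ⟨x, hx, harb⟩ := h₁.1.exists_map hf fun p q hpq => (hedge p q hpq).1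
  subst hroot
  calc arbWeightR w₂ (f r₁) T₂ ≤ arbWeightR w₂ (f r₁) (f ∘ T₁ ∘ x) := h₂.2 _ harb
    _ ≤ arbWeightR w₁ r₁ T₁ :=
        arbWeightR_map_le hx fun u hu => (hedge u (T₁ u) (h₁.1.1 u hu)).2
end

section
/- The large tilt graph of a region (a connected board) is weakly connected: for any two pixels u, v of the region, there is an undirected path between u† and v† in the large tilt graph, where p† denotes the anchor of p. -/
open Classical in
/-- The four tilt directions: right, left, up, down. -/
def dirs : Finset (ℤ × ℤ) := {(1, 0), (-1, 0), (0, 1), (0, -1)}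

/-- `TiltEnd B p d q`: starting at pixel `p` of the board `B` and moving in
direction `d`, the particle comes to rest at `q`, i.e. `q = p^d` is the extreme
pixel of the maximal segment through `p` in direction `d`. -/
def TiltEnd (B : Finset (ℤ × ℤ)) (p d q : ℤ × ℤ) : Prop :=
  (∃ n : ℕ, q = p + n • d ∧ ∀ m : ℕ, m ≤ n → p + m • d ∈ B) ∧ q + d ∉ B

/-- The full tilt graph of a board `B`: edges `(p, p^x)` for each direction. -/
def GF (B : Finset (ℤ × ℤ)) (p q : ℤ × ℤ) : Prop :=
  p ∈ B ∧ ∃ d ∈ dirs, TiltEnd B p d q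

/-- `p` and `q` lie in a common (maximal horizontal) row segment of `B`. -/
def SameRow (B : Finset (ℤ × ℤ)) (p q : ℤ × ℤ) : Prop :=
  p ∈ B ∧ q ∈ B ∧ p.2 = q.2 ∧
    ∀ x : ℤ, min p.1 q.1 ≤ x → x ≤ max p.1 q.1 → (x, p.2) ∈ B

/-- `p` and `q` lie in a common (maximal vertical) column segment of `B`. -/
def SameCol (B : Finset (ℤ × ℤ)) (p q : ℤ × ℤ) : Prop :=
  p ∈ B ∧ q ∈ B ∧ p.1 = q.1 ∧
    ∀ y : ℤ, min p.2 q.2 ≤ y → y ≤ max p.2 q.2 → (p.1, y) ∈ B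

/-- `R` is an axis-aligned rectangle of pixels whose upper-right cell is `a`. -/
def IsRect (R : Set (ℤ × ℤ)) (a : ℤ × ℤ) : Prop :=
  ∃ x₁ y₁ : ℤ, x₁ ≤ a.1 ∧ y₁ ≤ a.2 ∧
    R = {v | x₁ ≤ v.1 ∧ v.1 ≤ a.1 ∧ y₁ ≤ v.2 ∧ v.2 ≤ a.2}

/-- `a` is the anchor `p†` of `p`: `a` is the unique vertex of the large tilt
graph vertex set `VL` in a rectangle of pixels of `B` containing `p`, adjacent
on the inside to the rectangle's upper-right corner. -/
def IsAnchor (B : Finset (ℤ × ℤ)) (VL : Set (ℤ × ℤ)) (p a : ℤ × ℤ) : Prop :=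
  a ∈ VL ∧ ∃ R : Set (ℤ × ℤ), IsRect R a ∧ R ⊆ ↑B ∧ p ∈ R ∧
    ∀ v ∈ R, v ∈ VL → v = a

/-- `VL` is a valid vertex set for the large tilt graph of board `B` with sinks
`S`: it consists of pixels, contains all sinks, is closed under tilt moves
(so it contains the tilt images of sinks and the segment endpoints it needs),
and is closed under intersections of row and column segments through its
vertices. -/
structure LargeTiltSet (B : Finset (ℤ × ℤ)) (S VL : Set (ℤ × ℤ)) : Prop where
  subset : VL ⊆ ↑B
  sinks : S ⊆ VL
  tiltClosed : ∀ v ∈ VL, ∀ d ∈ dirs, ∀ q, TiltEnd B v d q → q ∈ VL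
  interClosed : ∀ a ∈ VL, ∀ b ∈ VL, ∀ c, SameRow B a c → SameCol B b c → c ∈ VL

/-- The large tilt graph: the subgraph of the full tilt graph induced by `VL`. -/
def GLarge (B : Finset (ℤ × ℤ)) (VL : Set (ℤ × ℤ)) (p q : ℤ × ℤ) : Prop :=
  p ∈ VL ∧ q ∈ VL ∧ GF B p q

/-- Symmetrization of an edge relation (for undirected paths). -/
def Symm {α : Type*} (E : α → α → Prop) : α → α → Prop := fun a b => E a b ∨ E b a

/-- Orthogonal adjacency of pixels of a board. -/
def Adj (B : Finset (ℤ × ℤ)) (p q : ℤ × ℤ) : Prop :=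
  p ∈ B ∧ q ∈ B ∧ (q = p + (1, 0) ∨ q = p + (-1, 0) ∨ q = p + (0, 1) ∨ q = p + (0, -1))

/-! For adjacent pixels `p` and `q = p + (1, 0)` with anchors `a` and `b`, either the anchor
rectangle of one of them contains the other, and then `a = b`, or the two rectangles abut
along a vertical line and share a row. In the second case tilt `a` to the right, to `w ∈ VL`.
If `w` falls into the rectangle of `b`, then `w = b`. Otherwise the intersection of the row of
`w` with the column of `b` is a vertex of `VL` in the rectangle of `b`, hence is `b`; so `b`
lies on the row of `a` and also tilts right to `w`, giving `a → w ← b`. Vertical adjacency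
reduces to horizontal adjacency by transposing the board. -/

section

variable {B : Finset (ℤ × ℤ)} {S VL : Set (ℤ × ℤ)}

lemma right_mem_dirs : ((1, 0) : ℤ × ℤ) ∈ dirs := by simp [dirs]

lemma swap_mem_dirs {d : ℤ × ℤ} (hd : d ∈ dirs) : d.swap ∈ dirs := by
  simp only [dirs, Finset.mem_insert, Finset.mem_singleton] at hd ⊢
  rcases hd with rfl | rfl | rfl | rfl <;> simp

lemma tiltEnd_right_of_segment {p q : ℤ × ℤ} (hy : q.2 = p.2) (hle : p.1 ≤ q.1)
    (hseg : ∀ x, p.1 ≤ x → x ≤ q.1 → (x, p.2) ∈ B) (hstop : (q.1 + 1, q.2) ∉ B) :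
    TiltEnd B p (1, 0) q := by
  refine ⟨⟨(q.1 - p.1).toNat, ?_, fun m hm => ?_⟩, ?_⟩
  · ext <;> simp only [Prod.smul_mk, Int.nsmul_eq_mul, Int.ofNat_toNat, mul_one, nsmul_zero,
      Prod.fst_add, Prod.snd_add, add_zero] <;> omega
  · convert hseg (p.1 + m) (by omega) (by omega) using 1
    ext <;> simp
  · convert hstop using 2
    ext <;> simp

lemma exists_segment_end_right {p : ℤ × ℤ} (hp : p ∈ B) :
    ∃ x, p.1 ≤ x ∧ (∀ x', p.1 ≤ x' → x' ≤ x → (x', p.2) ∈ B) ∧ (x + 1, p.2) ∉ B := by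
  obtain ⟨M, hM⟩ := (B.image Prod.fst).bddAbove
  obtain ⟨x, ⟨hpx, hseg⟩, hmax⟩ := Int.exists_greatest_of_bdd
    (P := fun x => p.1 ≤ x ∧ ∀ x', p.1 ≤ x' → x' ≤ x → (x', p.2) ∈ B)
    ⟨M, fun x hx => hM (Finset.mem_image_of_mem Prod.fst (hx.2 x hx.1 le_rfl))⟩
    ⟨p.1, le_rfl, fun x' h₁ h₂ => by rwa [le_antisymm h₂ h₁]⟩
  refine ⟨x, hpx, hseg, fun hx => ?_⟩
  have := hmax (x + 1) ⟨by omega, fun x' h₁ h₂ => ?_⟩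
  · omega
  · rcases h₂.lt_or_eq with h | rfl
    exacts [hseg x' h₁ (by omega), hx]

lemma sameRow_of_segment {p q : ℤ × ℤ} (hy : p.2 = q.2) (hle : q.1 ≤ p.1)
    (hseg : ∀ x, q.1 ≤ x → x ≤ p.1 → (x, p.2) ∈ B) : SameRow B p q :=
  ⟨hseg p.1 hle le_rfl, by simpa [hy] using hseg q.1 le_rfl hle, hy,
    fun x h₁ h₂ => hseg x (by omega) (by omega)⟩

lemma sameCol_of_segment {p q : ℤ × ℤ} (hx : p.1 = q.1) (hle : q.2 ≤ p.2)
    (hseg : ∀ y, q.2 ≤ y → y ≤ p.2 → (p.1, y) ∈ B) : SameCol B p q :=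
  ⟨hseg p.2 hle le_rfl, by simpa [hx] using hseg q.2 le_rfl hle, hx,
    fun y h₁ h₂ => hseg y (by omega) (by omega)⟩

def IsAnchorBox (B : Finset (ℤ × ℤ)) (VL : Set (ℤ × ℤ)) (x₀ y₀ : ℤ) (a : ℤ × ℤ) : Prop :=
  (∀ x y, x₀ ≤ x → x ≤ a.1 → y₀ ≤ y → y ≤ a.2 → (x, y) ∈ B) ∧
    ∀ x y, x₀ ≤ x → x ≤ a.1 → y₀ ≤ y → y ≤ a.2 → (x, y) ∈ VL → (x, y) = a

lemma isAnchor_iff_exists_isAnchorBox {p a : ℤ × ℤ} :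
    IsAnchor B VL p a ↔ a ∈ VL ∧ ∃ x₀ y₀, x₀ ≤ p.1 ∧ p.1 ≤ a.1 ∧ y₀ ≤ p.2 ∧ p.2 ≤ a.2 ∧
      IsAnchorBox B VL x₀ y₀ a := by
  constructor
  · rintro ⟨ha, R, ⟨x₀, y₀, -, -, rfl⟩, hRB, ⟨h₁, h₂, h₃, h₄⟩, hRVL⟩
    exact ⟨ha, x₀, y₀, h₁, h₂, h₃, h₄, fun x y hx₁ hx₂ hy₁ hy₂ => hRB ⟨hx₁, hx₂, hy₁, hy₂⟩,
      fun x y hx₁ hx₂ hy₁ hy₂ => hRVL _ ⟨hx₁, hx₂, hy₁, hy₂⟩⟩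
  · rintro ⟨ha, x₀, y₀, h₁, h₂, h₃, h₄, hB, hVL⟩
    exact ⟨ha, _, ⟨x₀, y₀, h₁.trans h₂, h₃.trans h₄, rfl⟩,
      fun v ⟨hx₁, hx₂, hy₁, hy₂⟩ => hB v.1 v.2 hx₁ hx₂ hy₁ hy₂, ⟨h₁, h₂, h₃, h₄⟩,
      fun v ⟨hx₁, hx₂, hy₁, hy₂⟩ => hVL v.1 v.2 hx₁ hx₂ hy₁ hy₂⟩

lemma reflTransGen_of_isAnchorBox_right (hVL : LargeTiltSet B S VL) {a b : ℤ × ℤ}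
    {x₀ y₀ y₁ y : ℤ} (ha : a ∈ VL) (hb : b ∈ VL) (hRa : IsAnchorBox B VL x₀ y₀ a)
    (hRb : IsAnchorBox B VL (a.1 + 1) y₁ b) (hx₀ : x₀ ≤ a.1) (hab : a.1 < b.1)
    (hy₀ : y₀ ≤ y) (hya : y ≤ a.2) (hy₁ : y₁ ≤ y) (hyb : y ≤ b.2) :
    Relation.ReflTransGen (Symm (GLarge B VL)) a b := by
  have hab₂ : a.2 ≤ b.2 := by
    -- otherwise `(a.1, b.2)`, on the row of `b` and the column of `a`, would be a second
    -- vertex of `VL` in the rectangle of `a`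
    by_contra! h
    have hc : (a.1, b.2) ∈ VL := hVL.interClosed b hb a ha _
      (sameRow_of_segment rfl hab.le fun x h₁ h₂ => ?_)
      (sameCol_of_segment rfl h.le fun y' h₁ h₂ => hRa.1 _ _ hx₀ le_rfl (by omega) h₂)
    · have : b.2 = a.2 := (Prod.ext_iff.1 (hRa.2 a.1 b.2 hx₀ le_rfl (by omega) h.le hc)).2
      omega
    · rcases h₁.eq_or_lt with rfl | h₁
      exacts [hRa.1 _ _ hx₀ le_rfl (by omega) h.le, hRb.1 _ _ h₁ h₂ (by omega) le_rfl]
  obtain ⟨w, haw, hseg, hstop⟩ := exists_segment_end_right (hVL.subset ha)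
  have htilt : TiltEnd B a (1, 0) (w, a.2) := tiltEnd_right_of_segment rfl haw hseg hstop
  have hw : (w, a.2) ∈ VL := hVL.tiltClosed a ha _ right_mem_dirs _ htilt
  have hedge : GLarge B VL a (w, a.2) := ⟨ha, hw, hVL.subset ha, _, right_mem_dirs, htilt⟩
  have haw' : a.1 < w := by
    by_contra! h
    obtain rfl : w = a.1 := by omega
    exact hstop (hRb.1 _ _ le_rfl (by omega) (by omega) hab₂)
  rcases le_or_gt w b.1 with hwb | hbw
  · rw [← hRb.2 w a.2 (by omega) hwb (by omega) hab₂ hw]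
    exact .single (.inl hedge)
  · have hc : (b.1, a.2) ∈ VL := hVL.interClosed _ hw b hb _
      (sameRow_of_segment rfl hbw.le fun x h₁ h₂ => hseg x (by omega) h₂)
      (sameCol_of_segment rfl hab₂ fun y' h₁ h₂ => hRb.1 _ _ (by omega) le_rfl (by omega) h₂)
    have hba : b.2 = a.2 :=
      (congrArg Prod.snd (hRb.2 b.1 a.2 (by omega) le_rfl (by omega) hab₂ hc)).symm
    have hedge' : GLarge B VL b (w, a.2) := ⟨hb, hw, hVL.subset hb, _, right_mem_dirs,
      tiltEnd_right_of_segment hba.symm hbw.le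
        (fun x h₁ h₂ => hba ▸ hseg x (by omega) h₂) hstop⟩
    exact .tail (.single (.inl hedge)) (.inr hedge')

lemma isAnchor_or_isAnchor_or_reflTransGen_right (hVL : LargeTiltSet B S VL)
    {p a b : ℤ × ℤ} (ha : IsAnchor B VL p a) (hb : IsAnchor B VL (p + (1, 0)) b) :
    IsAnchor B VL (p + (1, 0)) a ∨ IsAnchor B VL p b ∨
      Relation.ReflTransGen (Symm (GLarge B VL)) a b := by
  simp only [isAnchor_iff_exists_isAnchorBox, Prod.fst_add, Prod.snd_add, add_zero] at ha hb ⊢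
  obtain ⟨ha, x₀, y₀, hx₀, hpa, hy₀, hpa₂, hRa⟩ := ha
  obtain ⟨hb, x₁, y₁, hx₁, hpb, hy₁, hpb₂, hRb⟩ := hb
  rcases hpa.lt_or_eq with h | h
  · exact .inl ⟨ha, x₀, y₀, by omega, by omega, hy₀, hpa₂, hRa⟩
  rcases hx₁.lt_or_eq with h' | h'
  · exact .inr (.inl ⟨hb, x₁, y₁, by omega, by omega, hy₁, hpb₂, hRb⟩)
  obtain rfl : x₁ = a.1 + 1 := by omega
  exact .inr (.inr (reflTransGen_of_isAnchorBox_right hVL ha hb hRa hRb (by omega) (by omega)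
    hy₀ hpa₂ hy₁ hpb₂))

def transposeBoard (B : Finset (ℤ × ℤ)) : Finset (ℤ × ℤ) :=
  B.map (Equiv.prodComm ℤ ℤ).toEmbedding

@[simp]
lemma mem_transposeBoard {p : ℤ × ℤ} : p ∈ transposeBoard B ↔ p.swap ∈ B := by
  simp [transposeBoard]

lemma tiltEnd_transposeBoard {p d q : ℤ × ℤ} :
    TiltEnd (transposeBoard B) p d q ↔ TiltEnd B p.swap d.swap q.swap := by
  simp only [TiltEnd, mem_transposeBoard]
  exact and_congr (exists_congr fun _ => and_congr Prod.swap_injective.eq_iff.symm Iff.rfl) Iff.rfl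

lemma GLarge.of_transposeBoard {p q : ℤ × ℤ}
    (h : GLarge (transposeBoard B) (Prod.swap ⁻¹' VL) p q) : GLarge B VL p.swap q.swap :=
  let ⟨hp, hq, hpB, d, hd, ht⟩ := h
  ⟨hp, hq, mem_transposeBoard.1 hpB, d.swap, swap_mem_dirs hd, tiltEnd_transposeBoard.1 ht⟩

lemma reflTransGen_of_transposeBoard {a b : ℤ × ℤ}
    (h : Relation.ReflTransGen (Symm (GLarge (transposeBoard B) (Prod.swap ⁻¹' VL))) a b) :
    Relation.ReflTransGen (Symm (GLarge B VL)) a.swap b.swap :=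
  h.lift Prod.swap fun _ _ => Or.imp GLarge.of_transposeBoard GLarge.of_transposeBoard

lemma sameRow_transposeBoard_iff {p q : ℤ × ℤ} :
    SameRow (transposeBoard B) p q ↔ SameCol B p.swap q.swap := by
  simp [SameRow, SameCol]

lemma sameCol_transposeBoard_iff {p q : ℤ × ℤ} :
    SameCol (transposeBoard B) p q ↔ SameRow B p.swap q.swap := by
  simp [SameRow, SameCol]

lemma LargeTiltSet.transpose (h : LargeTiltSet B S VL) :
    LargeTiltSet (transposeBoard B) (Prod.swap ⁻¹' S) (Prod.swap ⁻¹' VL) where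
  subset _ hv := mem_transposeBoard.2 (h.subset hv)
  sinks _ hv := h.sinks hv
  tiltClosed _ hv _ hd _ ht :=
    h.tiltClosed _ hv _ (swap_mem_dirs hd) _ (tiltEnd_transposeBoard.1 ht)
  interClosed _ ha _ hb _ hac hbc := h.interClosed _ hb _ ha _
    (sameCol_transposeBoard_iff.1 hbc) (sameRow_transposeBoard_iff.1 hac)

lemma isAnchorBox_transposeBoard_iff {x₀ y₀ : ℤ} {a : ℤ × ℤ} :
    IsAnchorBox (transposeBoard B) (Prod.swap ⁻¹' VL) x₀ y₀ a ↔ IsAnchorBox B VL y₀ x₀ a.swap := by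
  simp only [IsAnchorBox, mem_transposeBoard, Set.mem_preimage, Prod.swap_prod_mk, Prod.fst_swap,
    Prod.snd_swap]
  constructor <;> rintro ⟨hB, hVL⟩ <;>
    refine ⟨fun x y hx₁ hx₂ hy₁ hy₂ => hB y x hy₁ hy₂ hx₁ hx₂, fun x y hx₁ hx₂ hy₁ hy₂ hxy => ?_⟩
  · rw [← hVL y x hy₁ hy₂ hx₁ hx₂ hxy, Prod.swap_prod_mk]
  · simpa using congrArg Prod.swap (hVL y x hy₁ hy₂ hx₁ hx₂ hxy)

lemma isAnchor_transposeBoard_iff {p a : ℤ × ℤ} :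
    IsAnchor (transposeBoard B) (Prod.swap ⁻¹' VL) p a ↔ IsAnchor B VL p.swap a.swap := by
  simp only [isAnchor_iff_exists_isAnchorBox, isAnchorBox_transposeBoard_iff, Set.mem_preimage,
    Prod.fst_swap, Prod.snd_swap]
  constructor <;> rintro ⟨ha, x₀, y₀, h₁, h₂, h₃, h₄, h⟩ <;> exact ⟨ha, y₀, x₀, h₃, h₄, h₁, h₂, h⟩

instance {α : Type*} (E : α → α → Prop) : Std.Symm (Symm E) := ⟨fun _ _ => Or.symm⟩

lemma isAnchor_or_isAnchor_or_reflTransGen_up (hVL : LargeTiltSet B S VL)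
    {p a b : ℤ × ℤ} (ha : IsAnchor B VL p a) (hb : IsAnchor B VL (p + (0, 1)) b) :
    IsAnchor B VL (p + (0, 1)) a ∨ IsAnchor B VL p b ∨
      Relation.ReflTransGen (Symm (GLarge B VL)) a b := by
  have hswap : (p.swap + (1, 0)).swap = p + (0, 1) := rfl
  have key := isAnchor_or_isAnchor_or_reflTransGen_right hVL.transpose (p := p.swap)
    (a := a.swap) (b := b.swap) (isAnchor_transposeBoard_iff.2 (by simpa using ha))
    (isAnchor_transposeBoard_iff.2 (by simpa [hswap] using hb))
  simp only [isAnchor_transposeBoard_iff, hswap, Prod.swap_swap] at key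
  exact key.imp_right (Or.imp_right fun h => by simpa using reflTransGen_of_transposeBoard h)

lemma reflTransGen_anchor_of_adj (hVL : LargeTiltSet B S VL) {A : ℤ × ℤ → ℤ × ℤ}
    (hA : ∀ p ∈ B, IsAnchor B VL p (A p))
    (hAuniq : ∀ p ∈ B, ∀ a₁ a₂, IsAnchor B VL p a₁ → IsAnchor B VL p a₂ → a₁ = a₂)
    {p q : ℤ × ℤ} (hpq : Adj B p q) : Relation.ReflTransGen (Symm (GLarge B VL)) (A p) (A q) := by
  have resolve : ∀ p ∈ B, ∀ q ∈ B, IsAnchor B VL q (A p) ∨ IsAnchor B VL p (A q) ∨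
      Relation.ReflTransGen (Symm (GLarge B VL)) (A p) (A q) →
      Relation.ReflTransGen (Symm (GLarge B VL)) (A p) (A q) := by
    rintro p hp q hq (h | h | h)
    · rw [hAuniq q hq _ _ h (hA q hq)]
    · rw [hAuniq p hp _ _ h (hA p hp)]
    · exact h
  obtain ⟨hp, hq, rfl | h | rfl | h⟩ := hpq
  · exact resolve p hp _ hq (isAnchor_or_isAnchor_or_reflTransGen_right hVL (hA p hp) (hA _ hq))
  · obtain rfl : p = q + (1, 0) := by rw [h, add_assoc]; simp
    exact symm <| resolve q hq _ hp
      (isAnchor_or_isAnchor_or_reflTransGen_right hVL (hA q hq) (hA _ hp))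
  · exact resolve p hp _ hq (isAnchor_or_isAnchor_or_reflTransGen_up hVL (hA p hp) (hA _ hq))
  · obtain rfl : p = q + (0, 1) := by rw [h, add_assoc]; simp
    exact symm <| resolve q hq _ hp
      (isAnchor_or_isAnchor_or_reflTransGen_up hVL (hA q hq) (hA _ hp))

end

/-- The large tilt graph of a region (connected board) is weakly connected:
any two anchors are joined by an undirected path in the large tilt graph. -/
theorem stmt7 (B : Finset (ℤ × ℤ)) (S VL : Set (ℤ × ℤ))
    (hVL : LargeTiltSet B S VL)
    (A : ℤ × ℤ → ℤ × ℤ)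
    (hA : ∀ p ∈ B, IsAnchor B VL p (A p))
    (hAuniq : ∀ p ∈ B, ∀ a₁ a₂, IsAnchor B VL p a₁ → IsAnchor B VL p a₂ → a₁ = a₂)
    (hconn : ∀ p ∈ B, ∀ q ∈ B, Relation.ReflTransGen (Adj B) p q)
    (u : ℤ × ℤ) (hu : u ∈ B) (v : ℤ × ℤ) (hv : v ∈ B) :
    Relation.ReflTransGen (Symm (GLarge B VL)) (A u) (A v) :=
  (hconn u hu v hv).lift' A fun _ _ => reflTransGen_anchor_of_adj hVL hA hAuniq
end

section
/- Let T be a spanning arborescence converging to root r in a directed graph, and define the depth d(v) of a vertex v as the length of its T-path to r. If (p, q) ∈ T, then d(p) = d(q) + 1. Consequently, for any two distinct edges (p₁, q₁), (p₂, q₂) ∈ T with d(q₁) ≥ d(q₂), replacing (p₁, q₁) by any graph edge (p₁, p₂) with p₂ ≠ p₁ not in the T-subtree rooted at p₁ yields another spanning arborescence converging to r. -/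
/-- The depth of `v`: the length of the path from `v` to the root `r` in the
arborescence given by the parent map `f`. -/
noncomputable def depthTo {V : Type*} (f : V → V) (r v : V) : ℕ :=
  sInf {n : ℕ | f^[n] v = r}

/-! Swapping the parent of `p₁` to `p₂` changes the parent map only at `p₁`. Since `p₁` does not
lie on the path from `p₂` to the root, that path is untouched and still reaches `r`; every other
vertex follows its old path until it reaches either `r` or `p₁`, and from `p₁` it continues along
the path of `p₂`. The depth identity is the minimality of `sInf` along one edge. -/

theorem iterate_depthTo_eq {V : Type*} {f : V → V} {r v : V} (h : ∃ n, f^[n] v = r) :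
    f^[depthTo f r v] v = r :=
  Nat.sInf_mem h

theorem depthTo_eq_depthTo_apply_add_one {V : Type*} {f : V → V} {r p : V} (hp : p ≠ r)
    (h : ∃ n, f^[n] (f p) = r) : depthTo f r p = depthTo f r (f p) + 1 := by
  apply le_antisymm
  · apply Nat.sInf_le
    show f^[depthTo f r (f p) + 1] p = r
    rw [Function.iterate_succ_apply]
    exact iterate_depthTo_eq h
  · obtain ⟨n, hn⟩ := h
    have hp_reach : f^[depthTo f r p] p = r := iterate_depthTo_eq ⟨n + 1, hn⟩
    cases hd : depthTo f r p with
    | zero => rw [hd] at hp_reach; exact absurd hp_reach hp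
    | succ m =>
      rw [hd, Function.iterate_succ_apply] at hp_reach
      exact Nat.succ_le_succ (Nat.sInf_le hp_reach)

theorem iterate_update_eq_of_not_exists_iterate_eq {V : Type*} [DecidableEq V] {f : V → V}
    {p x : V} (y : V) (hx : ¬∃ n, f^[n] x = p) (n : ℕ) :
    (Function.update f p y)^[n] x = f^[n] x := by
  induction n with
  | zero => rfl
  | succ k ih =>
    rw [Function.iterate_succ_apply', Function.iterate_succ_apply', ih,
      Function.update_of_ne fun h => hx ⟨k, h⟩]

theorem exists_iterate_update_eq {V : Type*} [DecidableEq V] {f : V → V} {p q r v : V}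
    (hq : ∃ n, (Function.update f p q)^[n] q = r) (hv : ∃ n, f^[n] v = r) :
    ∃ m, (Function.update f p q)^[m] v = r := by
  obtain ⟨n, hn⟩ := hv
  induction n generalizing v with
  | zero => exact ⟨0, hn⟩
  | succ n ih =>
    rcases eq_or_ne v p with rfl | hvp
    · obtain ⟨m, hm⟩ := hq
      exact ⟨m + 1, by rwa [Function.iterate_succ_apply, Function.update_self]⟩
    · rw [Function.iterate_succ_apply] at hn
      obtain ⟨m, hm⟩ := ih hn
      exact ⟨m + 1, by rwa [Function.iterate_succ_apply, Function.update_of_ne hvp]⟩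

theorem IsArbR.update {V : Type*} [DecidableEq V] {G : V → V → Prop} {r : V} {f : V → V}
    (hf : IsArbR G r f) {p q : V} (hpq : G p q) (hq : ¬∃ n, f^[n] q = p) :
    IsArbR G r (Function.update f p q) := by
  obtain ⟨hG, hreach⟩ := hf
  have hq_reach : ∃ n, (Function.update f p q)^[n] q = r := by
    obtain ⟨n, hn⟩ := hreach q
    exact ⟨n, (iterate_update_eq_of_not_exists_iterate_eq q hq n).trans hn⟩
  refine ⟨fun v hv => ?_, fun v => exists_iterate_update_eq hq_reach (hreach v)⟩
  rcases eq_or_ne v p with rfl | hvp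
  · rwa [Function.update_self]
  · rw [Function.update_of_ne hvp]
    exact hG v hv

/-- (a) Along an arborescence edge `(p, f p)` the depth drops by exactly one:
`d(p) = d(f p) + 1`.  (b) Edge-swap validity: for distinct arborescence edges
`(p₁, q₁)` and `(p₂, q₂)` with `d(q₁) ≥ d(q₂)`, replacing `(p₁, q₁)` by any
graph edge `(p₁, p₂)` with `p₂ ≠ p₁` not in the subtree rooted at `p₁` yields
again a spanning arborescence converging to `r`. -/
theorem stmt17 {V : Type*} [DecidableEq V] (G : V → V → Prop) (r : V)
    (f : V → V) (hf : IsArbR G r f) :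
    (∀ p, p ≠ r → depthTo f r p = depthTo f r (f p) + 1) ∧
    (∀ p₁ p₂ : V, p₁ ≠ r → p₂ ≠ r → (p₁, f p₁) ≠ (p₂, f p₂) →
      depthTo f r (f p₁) ≥ depthTo f r (f p₂) →
      G p₁ p₂ → p₂ ≠ p₁ → (¬ ∃ n : ℕ, f^[n] p₂ = p₁) →
      IsArbR G r (Function.update f p₁ p₂)) :=
  ⟨fun _ hp => depthTo_eq_depthTo_apply_add_one hp (hf.2 _),
    fun _ _ _ _ _ _ hG _ hsub => hf.update hG hsub⟩
end
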